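/- arXiv:1409.0509 — 3 statements merged into one kernel-verified Lean document; each statement's English description precedes it below -/
import Mathlib

section
/- Let (q:r:p) and (q':r':p') be two points of the projective Siegel model, i.e., nonzero vectors in C³ satisfying |r|² − 2Re(conj(q)·p) = 0 and |r'|² − 2Re(conj(q')·p') = 0 respectively. Then conj(q)·p' − conj(r)·r' + conj(p)·q' = 0 if and only if the two vectors are complex scalar multiples of each other. -/
open Complex

private lemma cone_complex {q r p : ℂ} (h : Complex.normSq r - 2 * (star q * p).re = 0) :
    star r * r = star q * p + q * star p := by
  have h0 : Complex.normSq r = 2 * (star q * p).re := by linarith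
  calc star r * r = (Complex.normSq r : ℂ) := by
        rw [Complex.star_def]; exact Complex.normSq_eq_conj_mul_self.symm
    _ = 2 * ((star q * p).re : ℂ) := by exact_mod_cast congrArg Complex.ofReal h0
    _ = star q * p + (starRingEnd ℂ) (star q * p) := by
        have h2 := Complex.add_conj (star q * p)
        push_cast at h2
        linear_combination -h2
    _ = star q * p + q * star p := by
        simp [Complex.star_def, map_mul, mul_comm]

theorem projective_siegel_pairing_eq_zero_iff
    (q r p q' r' p' : ℂ)
    (hne : (q, r, p) ≠ ((0 : ℂ), (0 : ℂ), (0 : ℂ)))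
    (hne' : (q', r', p') ≠ ((0 : ℂ), (0 : ℂ), (0 : ℂ)))
    (hcone : Complex.normSq r - 2 * (star q * p).re = 0)
    (hcone' : Complex.normSq r' - 2 * (star q' * p').re = 0) :
    star q * p' - star r * r' + star p * q' = 0 ↔
      ∃ c : ℂ, c ≠ 0 ∧ q' = c * q ∧ r' = c * r ∧ p' = c * p := by
  have hc1 : star r * r = star q * p + q * star p := cone_complex hcone
  have hc1' : star r' * r' = star q' * p' + q' * star p' := cone_complex hcone'
  constructor
  · intro h
    have h2 : q * star p' - r * star r' + p * star q' = 0 := by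
      have := congrArg star h
      simp only [star_sub, star_add, star_mul, star_star, star_zero] at this
      linear_combination this
    by_cases hq : q = 0
    · have hr : r = 0 := by
        have : Complex.normSq r = 0 := by simpa [hq] using hcone
        simpa using this
      have hp : p ≠ 0 := by
        intro hp0; exact hne (by simp [hq, hr, hp0])
      by_cases hq' : q' = 0
      · have hr' : r' = 0 := by
          have : Complex.normSq r' = 0 := by simpa [hq'] using hcone'
          simpa using this
        have hp' : p' ≠ 0 := fun hp0 => hne' (by simp [hq', hr', hp0])
        exact ⟨p' / p, div_ne_zero hp' hp, by simp [hq', hq], by simp [hr', hr],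
          by field_simp⟩
      · exfalso
        have hz : star p * q' = 0 := by
          have := h
          rw [hq, hr] at this
          simpa using this
        rcases mul_eq_zero.mp hz with h' | h'
        · exact hp (by simpa using h')
        · exact hq' h'
    · by_cases hq' : q' = 0
      · exfalso
        have hr' : r' = 0 := by
          have : Complex.normSq r' = 0 := by simpa [hq'] using hcone'
          simpa using this
        have hp' : p' ≠ 0 := fun hp0 => hne' (by simp [hq', hr', hp0])
        have hz : star q * p' = 0 := by
          have := h
          rw [hq', hr'] at this
          simpa using this
        rcases mul_eq_zero.mp hz with h' | h'
        · exact hq (by simpa using h')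
        · exact hp' h'
      · -- main case : q ≠ 0, q' ≠ 0
        have key : (star q' * star r - star q * star r') * (q' * r - q * r') = 0 := by
          linear_combination (star q' * q') * hc1 + (star q * q) * hc1' +
            (q * star q') * h + (star q * q') * h2
        have hrr : q' * r = q * r' := by
          rcases mul_eq_zero.mp key with h' | h'
          · have := congrArg star h'
            simp only [star_sub, star_mul, star_star, star_zero] at this
            linear_combination this
          · linear_combination h'
        have hqs : star q ≠ 0 := by simpa using hq
        have hqp : q * p' = q' * p := by
          have : star q * (q * p') = star q * (q' * p) := by
            linear_combination q * h - star r * hrr + q' * hc1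
          exact mul_left_cancel₀ hqs this
        refine ⟨q' / q, div_ne_zero hq' hq, ?_, ?_, ?_⟩
        · field_simp
        · field_simp
          linear_combination -hrr
        · field_simp
          linear_combination hqp
  · rintro ⟨c, hc, rfl, rfl, rfl⟩
    linear_combination (-c) * hc1
end

section
/- Let J be the 3×3 matrix with rows (0,0,−1), (0,1,0), (−1,0,0), and let M be a complex 3×3 matrix with M† J M = J (where † is conjugate transpose). If h ∈ C³ is a nonzero vector on the Siegel cone (|h₂|² − 2Re(conj(h₁)h₃) = 0) satisfying h† J M h = 0, then h is an eigenvector of M, and consequently h† J Mᵏ h = 0 for every k ≥ 1. -/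
open Matrix Complex

/-- The inversion matrix J. -/
def Jmat : Matrix (Fin 3) (Fin 3) ℂ := !![0, 0, -1; 0, 1, 0; -1, 0, 0]

lemma prop_aux (a b c d e f : ℂ) (ha : a ≠ 0)
    (h1 : (starRingEnd ℂ) a * c + a * (starRingEnd ℂ) c = (starRingEnd ℂ) b * b)
    (h2 : (starRingEnd ℂ) d * f + d * (starRingEnd ℂ) f = (starRingEnd ℂ) e * e)
    (h3 : (starRingEnd ℂ) a * f + (starRingEnd ℂ) c * d = (starRingEnd ℂ) b * e) :
    ∃ t : ℂ, d = t * a ∧ e = t * b ∧ f = t * c := by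
  have h3' : a * (starRingEnd ℂ) f + c * (starRingEnd ℂ) d = b * (starRingEnd ℂ) e := by
    have := congrArg (starRingEnd ℂ) h3
    simpa [map_add, _root_.map_mul, mul_comm] using this
  have hae : a * e - b * d = 0 := by
    have hsq : (a * e - b * d) * (starRingEnd ℂ) (a * e - b * d) = 0 := by
      rw [map_sub, _root_.map_mul, _root_.map_mul]
      linear_combination (-(a * (starRingEnd ℂ) a)) * h2 - d * (starRingEnd ℂ) d * h1
        + a * (starRingEnd ℂ) d * h3 + (starRingEnd ℂ) a * d * h3'
    rcases mul_eq_zero.mp hsq with hz | hz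
    · exact hz
    · have := congrArg (starRingEnd ℂ) hz
      simpa using this
  have haf : a * f - c * d = 0 := by
    have ha' : (starRingEnd ℂ) a ≠ 0 := by simpa using ha
    have : (starRingEnd ℂ) a * (a * f - c * d) = 0 := by
      linear_combination a * h3 + (starRingEnd ℂ) b * hae - d * h1
    exact (mul_eq_zero.mp this).resolve_left ha'
  refine ⟨d / a, by field_simp, ?_, ?_⟩
  · rw [div_mul_eq_mul_div, eq_div_iff ha]; linear_combination hae
  · rw [div_mul_eq_mul_div, eq_div_iff ha]; linear_combination haf

lemma expandJ (x y : Fin 3 → ℂ) : star x ⬝ᵥ Jmat.mulVec y =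
    -((starRingEnd ℂ) (x 0) * y 2) + (starRingEnd ℂ) (x 1) * y 1 - (starRingEnd ℂ) (x 2) * y 0 := by
  simp [Jmat, Matrix.mulVec, dotProduct, Fin.sum_univ_three, Matrix.vecHead, Matrix.vecTail]
  ring

theorem eigenvector_of_relation (M : Matrix (Fin 3) (Fin 3) ℂ)
    (hM : Mᴴ * Jmat * M = Jmat)
    (h : Fin 3 → ℂ) (hne : h ≠ 0)
    (hcone : Complex.normSq (h 1) - 2 * (star (h 0) * h 2).re = 0)
    (hrel : star h ⬝ᵥ (Jmat * M).mulVec h = 0) :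
    (∃ lam : ℂ, M.mulVec h = lam • h) ∧
      ∀ k : ℕ, 1 ≤ k → star h ⬝ᵥ (Jmat * M ^ k).mulVec h = 0 := by
  set v := M.mulVec h with hv
  -- h is isotropic
  have hA : star h ⬝ᵥ Jmat.mulVec h = 0 := by
    rw [expandJ]
    have e1 : (starRingEnd ℂ) (h 1) * h 1 = ((normSq (h 1) : ℝ) : ℂ) := by
      rw [← Complex.normSq_eq_conj_mul_self]
    have e2 : (starRingEnd ℂ) (h 0) * h 2 + (starRingEnd ℂ) (h 2) * h 0
        = (((2 * (star (h 0) * h 2).re : ℝ)) : ℂ) := by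
      rw [show (starRingEnd ℂ) (h 2) * h 0
          = (starRingEnd ℂ) ((starRingEnd ℂ) (h 0) * h 2) by
        rw [_root_.map_mul, Complex.conj_conj]; ring]
      rw [Complex.add_conj]
      norm_num [RCLike.star_def]
    have hc : ((normSq (h 1) : ℝ) : ℂ) = (((2 * (star (h 0) * h 2).re : ℝ)) : ℂ) := by
      norm_cast; linarith [hcone]
    linear_combination hc - e2 + e1
  -- v is isotropic
  have hB : star v ⬝ᵥ Jmat.mulVec v = 0 := by
    have : star h ⬝ᵥ (Mᴴ * Jmat * M).mulVec h = star v ⬝ᵥ Jmat.mulVec v := by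
      rw [hv]
      simp [Matrix.star_mulVec, Matrix.dotProduct_mulVec, Matrix.mulVec_mulVec,
        Matrix.vecMul_vecMul, Matrix.mul_assoc]
    rw [← this, hM, hA]
  -- h ⟂ v
  have hC : star h ⬝ᵥ Jmat.mulVec v = 0 := by
    rw [hv, Matrix.mulVec_mulVec]
    exact hrel
  rw [expandJ] at hA hB hC
  have E1 : (starRingEnd ℂ) (h 0) * h 2 + h 0 * (starRingEnd ℂ) (h 2)
      = (starRingEnd ℂ) (h 1) * h 1 := by linear_combination -hA
  have E2 : (starRingEnd ℂ) (v 0) * v 2 + v 0 * (starRingEnd ℂ) (v 2)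
      = (starRingEnd ℂ) (v 1) * v 1 := by linear_combination -hB
  have E3 : (starRingEnd ℂ) (h 0) * v 2 + (starRingEnd ℂ) (h 2) * v 0
      = (starRingEnd ℂ) (h 1) * v 1 := by linear_combination -hC
  -- find the eigenvalue
  have hex : ∃ t : ℂ, v 0 = t * h 0 ∧ v 1 = t * h 1 ∧ v 2 = t * h 2 := by
    by_cases ha : h 0 ≠ 0
    · exact prop_aux (h 0) (h 1) (h 2) (v 0) (v 1) (v 2) ha E1 E2 E3
    · push_neg at ha
      by_cases hc2 : h 2 ≠ 0
      · obtain ⟨t, h1, h2, h3⟩ := prop_aux (h 2) (h 1) (h 0) (v 2) (v 1) (v 0) hc2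
          (by linear_combination E1) (by linear_combination E2) (by linear_combination E3)
        exact ⟨t, h3, h2, h1⟩
      · push_neg at hc2
        exfalso
        apply hne
        have hb : h 1 = 0 := by
          have : (starRingEnd ℂ) (h 1) * h 1 = 0 := by rw [← E1, ha, hc2]; ring
          rcases mul_eq_zero.mp this with hz | hz
          · simpa using congrArg (starRingEnd ℂ) hz
          · exact hz
        funext i
        fin_cases i <;> simp [ha, hb, hc2]
  obtain ⟨t, ht0, ht1, ht2⟩ := hex
  have heig : M.mulVec h = t • h := by
    funext i
    fin_cases i
    · exact ht0
    · exact ht1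
    · exact ht2
  refine ⟨⟨t, heig⟩, ?_⟩
  have hpow : ∀ k : ℕ, (M ^ k).mulVec h = (t ^ k) • h := by
    intro k
    induction k with
    | zero => simp
    | succ n ih =>
      rw [pow_succ, ← Matrix.mulVec_mulVec, heig, Matrix.mulVec_smul, ih, smul_smul,
        pow_succ, mul_comm]
  intro k hk
  rw [← Matrix.mulVec_mulVec, hpow]
  have hA' : star h ⬝ᵥ Jmat.mulVec h = 0 := by rw [expandJ]; linear_combination hA
  simp only [Matrix.mulVec_smul, dotProduct_smul, smul_eq_mul]
  rw [hA', mul_zero]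
end

section
/- If M ∈ U(2,1;Z[i]) has a zero entry in one of its four corners, then the two entries of M adjacent (horizontally and vertically) to that corner are also zero, and the three entries on the anti-diagonal relative to that corner each have norm 1; for example, if M₁₁ = 0 then M₁₂ = M₂₁ = 0 and |M₁₃| = |M₂₂| = |M₃₁| = 1. -/
open Matrix Complex

/-- A complex number is a Gaussian integer. -/
def IsGaussianInt (z : ℂ) : Prop := ∃ a b : ℤ, z = (a : ℂ) + (b : ℂ) * Complex.I

lemma conj_mul_self_eq_zero {z : ℂ} (h : (starRingEnd ℂ) z * z = 0) : z = 0 := by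
  rcases mul_eq_zero.mp h with h | h
  · simpa using h
  · exact h

lemma gauss_normSq_int {z : ℂ} (hz : IsGaussianInt z) :
    ∃ n : ℤ, 0 ≤ n ∧ Complex.normSq z = (n : ℝ) := by
  obtain ⟨a, b, rfl⟩ := hz
  refine ⟨a ^ 2 + b ^ 2, by positivity, ?_⟩
  simp [Complex.normSq_apply]
  ring_nf

lemma gauss_conj_mul_one {z w : ℂ} (hz : IsGaussianInt z) (hw : IsGaussianInt w)
    (h : (starRingEnd ℂ) z * w = 1) : ‖z‖ = 1 ∧ ‖w‖ = 1 := by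
  obtain ⟨n, hn, hzn⟩ := gauss_normSq_int hz
  obtain ⟨m, hm, hwm⟩ := gauss_normSq_int hw
  have h2 := congrArg Complex.normSq h
  rw [Complex.normSq_mul, Complex.normSq_conj, hzn, hwm] at h2
  simp at h2
  have hnm : n * m = 1 := by exact_mod_cast h2
  have hn1 : n = 1 := Int.eq_one_of_dvd_one hn ⟨m, hnm.symm⟩
  have hm1 : m = 1 := Int.eq_one_of_dvd_one hm ⟨n, by linarith [hnm, mul_comm n m]⟩
  constructor
  · have : Complex.normSq z = 1 := by rw [hzn, hn1]; norm_num
    have h3 := Complex.sq_norm z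
    rw [this] at h3
    nlinarith [norm_nonneg z]
  · have : Complex.normSq w = 1 := by rw [hwm, hm1]; norm_num
    have h3 := Complex.sq_norm w
    rw [this] at h3
    nlinarith [norm_nonneg w]

theorem corner_zero_structure (M : Matrix (Fin 3) (Fin 3) ℂ)
    (hent : ∀ i j, IsGaussianInt (M i j))
    (hM : Mᴴ * Jmat * M = Jmat) :
    (M 0 0 = 0 → M 0 1 = 0 ∧ M 1 0 = 0 ∧
      ‖M 0 2‖ = 1 ∧ ‖M 1 1‖ = 1 ∧ ‖M 2 0‖ = 1) ∧
    (M 0 2 = 0 → M 0 1 = 0 ∧ M 1 2 = 0 ∧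
      ‖M 0 0‖ = 1 ∧ ‖M 1 1‖ = 1 ∧ ‖M 2 2‖ = 1) ∧
    (M 2 0 = 0 → M 1 0 = 0 ∧ M 2 1 = 0 ∧
      ‖M 0 0‖ = 1 ∧ ‖M 1 1‖ = 1 ∧ ‖M 2 2‖ = 1) ∧
    (M 2 2 = 0 → M 2 1 = 0 ∧ M 1 2 = 0 ∧
      ‖M 2 0‖ = 1 ∧ ‖M 1 1‖ = 1 ∧ ‖M 0 2‖ = 1) := by
  have h := fun j k => congrFun (congrFun hM j) k
  have h00 := h 0 0; have h01 := h 0 1; have h02 := h 0 2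
  have h11 := h 1 1; have h12 := h 1 2; have h22 := h 2 2
  simp [Matrix.mul_apply, Fin.sum_univ_three, Jmat, Matrix.conjTranspose_apply,
    Matrix.vecHead, Matrix.vecTail] at h00 h01 h02 h11 h12 h22
  refine ⟨?_, ?_, ?_, ?_⟩
  · intro h0
    have h0' : (starRingEnd ℂ) (M 0 0) = 0 := by rw [h0]; simp
    have e10 : M 1 0 = 0 := by
      apply conj_mul_self_eq_zero
      linear_combination h00 + (starRingEnd ℂ) (M 2 0) * h0 + M 2 0 * h0'
    have e10' : (starRingEnd ℂ) (M 1 0) = 0 := by rw [e10]; simp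
    have e1 : (starRingEnd ℂ) (M 2 0) * M 0 2 = 1 := by
      linear_combination -h02 + M 1 2 * e10' - M 2 2 * h0'
    obtain ⟨ha20, ha02⟩ := gauss_conj_mul_one (hent 2 0) (hent 0 2) e1
    have h20ne : M 2 0 ≠ 0 := by
      intro hc; rw [hc] at ha20; simp at ha20
    have e01 : M 0 1 = 0 := by
      have e2 : (starRingEnd ℂ) (M 2 0) * M 0 1 = 0 := by
        linear_combination -h01 + M 1 1 * e10' - M 2 1 * h0'
      rcases mul_eq_zero.mp e2 with hc | hc
      · exact absurd (by simpa using hc) h20ne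
      · exact hc
    have e01' : (starRingEnd ℂ) (M 0 1) = 0 := by rw [e01]; simp
    have e11 : (starRingEnd ℂ) (M 1 1) * M 1 1 = 1 := by
      linear_combination h11 + (starRingEnd ℂ) (M 2 1) * e01 + M 2 1 * e01'
    obtain ⟨ha11, _⟩ := gauss_conj_mul_one (hent 1 1) (hent 1 1) e11
    exact ⟨e01, e10, ha02, ha11, ha20⟩
  · intro h0
    have h0' : (starRingEnd ℂ) (M 0 2) = 0 := by rw [h0]; simp
    have e12 : M 1 2 = 0 := by
      apply conj_mul_self_eq_zero
      linear_combination h22 + (starRingEnd ℂ) (M 2 2) * h0 + M 2 2 * h0'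
    have e12' : (starRingEnd ℂ) (M 1 2) = 0 := by rw [e12]; simp
    have e1 : (starRingEnd ℂ) (M 0 0) * M 2 2 = 1 := by
      linear_combination -h02 - (starRingEnd ℂ) (M 2 0) * h0 + (starRingEnd ℂ) (M 1 0) * e12
    obtain ⟨ha00, ha22⟩ := gauss_conj_mul_one (hent 0 0) (hent 2 2) e1
    have h22ne : M 2 2 ≠ 0 := by
      intro hc; rw [hc] at ha22; simp at ha22
    have e01 : M 0 1 = 0 := by
      have e2 : (starRingEnd ℂ) (M 0 1) * M 2 2 = 0 := by
        linear_combination -h12 - (starRingEnd ℂ) (M 2 1) * h0 + (starRingEnd ℂ) (M 1 1) * e12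
      rcases mul_eq_zero.mp e2 with hc | hc
      · simpa using hc
      · exact absurd hc h22ne
    have e01' : (starRingEnd ℂ) (M 0 1) = 0 := by rw [e01]; simp
    have e11 : (starRingEnd ℂ) (M 1 1) * M 1 1 = 1 := by
      linear_combination h11 + (starRingEnd ℂ) (M 2 1) * e01 + M 2 1 * e01'
    obtain ⟨ha11, _⟩ := gauss_conj_mul_one (hent 1 1) (hent 1 1) e11
    exact ⟨e01, e12, ha00, ha11, ha22⟩
  · intro h0
    have h0' : (starRingEnd ℂ) (M 2 0) = 0 := by rw [h0]; simp
    have e10 : M 1 0 = 0 := by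
      apply conj_mul_self_eq_zero
      linear_combination h00 + M 0 0 * h0' + (starRingEnd ℂ) (M 0 0) * h0
    have e10' : (starRingEnd ℂ) (M 1 0) = 0 := by rw [e10]; simp
    have e1 : (starRingEnd ℂ) (M 0 0) * M 2 2 = 1 := by
      linear_combination -h02 - M 0 2 * h0' + M 1 2 * e10'
    obtain ⟨ha00, ha22⟩ := gauss_conj_mul_one (hent 0 0) (hent 2 2) e1
    have h00ne : M 0 0 ≠ 0 := by
      intro hc; rw [hc] at ha00; simp at ha00
    have e21 : M 2 1 = 0 := by
      have e2 : (starRingEnd ℂ) (M 0 0) * M 2 1 = 0 := by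
        linear_combination -h01 - M 0 1 * h0' + M 1 1 * e10'
      rcases mul_eq_zero.mp e2 with hc | hc
      · exact absurd (by simpa using hc) h00ne
      · exact hc
    have e21' : (starRingEnd ℂ) (M 2 1) = 0 := by rw [e21]; simp
    have e11 : (starRingEnd ℂ) (M 1 1) * M 1 1 = 1 := by
      linear_combination h11 + M 0 1 * e21' + (starRingEnd ℂ) (M 0 1) * e21
    obtain ⟨ha11, _⟩ := gauss_conj_mul_one (hent 1 1) (hent 1 1) e11
    exact ⟨e10, e21, ha00, ha11, ha22⟩
  · intro h0
    have h0' : (starRingEnd ℂ) (M 2 2) = 0 := by rw [h0]; simp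
    have e12 : M 1 2 = 0 := by
      apply conj_mul_self_eq_zero
      linear_combination h22 + M 0 2 * h0' + (starRingEnd ℂ) (M 0 2) * h0
    have e12' : (starRingEnd ℂ) (M 1 2) = 0 := by rw [e12]; simp
    have e1 : (starRingEnd ℂ) (M 2 0) * M 0 2 = 1 := by
      linear_combination -h02 + (starRingEnd ℂ) (M 1 0) * e12 - (starRingEnd ℂ) (M 0 0) * h0
    obtain ⟨ha20, ha02⟩ := gauss_conj_mul_one (hent 2 0) (hent 0 2) e1
    have h02ne : M 0 2 ≠ 0 := by
      intro hc; rw [hc] at ha02; simp at ha02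
    have e21 : M 2 1 = 0 := by
      have e2 : (starRingEnd ℂ) (M 2 1) * M 0 2 = 0 := by
        linear_combination -h12 + (starRingEnd ℂ) (M 1 1) * e12 - (starRingEnd ℂ) (M 0 1) * h0
      rcases mul_eq_zero.mp e2 with hc | hc
      · simpa using hc
      · exact absurd hc h02ne
    have e21' : (starRingEnd ℂ) (M 2 1) = 0 := by rw [e21]; simp
    have e11 : (starRingEnd ℂ) (M 1 1) * M 1 1 = 1 := by
      linear_combination h11 + M 0 1 * e21' + (starRingEnd ℂ) (M 0 1) * e21
    obtain ⟨ha11, _⟩ := gauss_conj_mul_one (hent 1 1) (hent 1 1) e11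
    exact ⟨e21, e12, ha20, ha11, ha02⟩
end
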